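/- Dirichlet form comparison for delayed acceptance: let K be μ-reversible, w = dν/dμ with c̲ ≤ w ≤ ‖w‖_∞ < ∞ μ-a.e., and let K^DA be the DA correction of K, which is ν-reversible. Then for all g ∈ L²(μ): c̲ · E_K(g) ≤ E_{K^DA}(g) ≤ ‖w‖_∞ · E_K(g), where E_K is the Dirichlet form w.r.t. μ and E_{K^DA} the Dirichlet form w.r.t. ν. This follows from the identity E_{K^DA}(g) = (1/2)∫ μ(dx) K_x(dx') min{w(x), w(x')} (g(x)−g(x'))². -/

import Mathlib

open MeasureTheory ProbabilityTheory Filter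
open scoped ENNReal

section Defs
variable {X : Type*} [MeasurableSpace X]

/-- The Markov operator `K f (x) = ∫ f(y) K(x, dy)`. -/
noncomputable def kOp (K : Kernel X X) (f : X → ℝ) : X → ℝ :=
  fun x => ∫ y, f y ∂(K x)

/-- Iterates of the Markov operator: `kIter K n f = Kⁿ f`. -/
noncomputable def kIter (K : Kernel X X) : ℕ → (X → ℝ) → (X → ℝ)
  | 0, f => f
  | n + 1, f => kOp K (kIter K n f)

/-- Iterates of a kernel, as kernels. -/
noncomputable def kIterK (K : Kernel X X) : ℕ → Kernel X X
  | 0 => Kernel.id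
  | n + 1 => K.comp (kIterK K n)

/-- Detailed balance / reversibility of `K` with respect to `μ`. -/
def Reversible (μ : Measure X) (K : Kernel X X) : Prop :=
  μ.compProd K = (μ.compProd K).map Prod.swap

/-- Invariance of `μ` for `K`. -/
def Invariant (μ : Measure X) (K : Kernel X X) : Prop :=
  μ.bind (fun x => K x) = μ

/-- Harris ergodicity: invariance, ψ-irreducibility, and triviality of bounded
harmonic functions (a standing proxy for Harris recurrence). -/
def HarrisErgodic (μ : Measure X) (K : Kernel X X) : Prop :=
  Invariant μ K ∧
  (∃ ψ : Measure X, ψ ≠ 0 ∧ ∀ A : Set X, MeasurableSet A → 0 < ψ A →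
    ∀ x : X, ∃ n : ℕ, 0 < kIterK K n x A) ∧
  (∀ f : X → ℝ, Measurable f → (∃ C, ∀ x, |f x| ≤ C) → kOp K f = f →
    ∃ c : ℝ, f =ᵐ[μ] fun _ => c)

/-- Centering of `f` with respect to `μ`. -/
noncomputable def center (μ : Measure X) (f : X → ℝ) : X → ℝ :=
  fun x => f x - ∫ y, f y ∂μ

/-- `n⁻¹ E[(∑_{k<n} (f(X_k) - μ(f)))²]` for the stationary chain with kernel `K`,
expanded via stationarity into covariances `∫ f̄ · K^{|i-j|} f̄ dμ`. -/
noncomputable def avarSeq (μ : Measure X) (K : Kernel X X) (f : X → ℝ) (n : ℕ) : ℝ :=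
  (n : ℝ)⁻¹ * ∑ i ∈ Finset.range n, ∑ j ∈ Finset.range n,
    ∫ x, center μ f x * kIter K (max i j - min i j) (center μ f) x ∂μ

/-- `v` is the asymptotic variance of `f` for the stationary chain with kernel `K`. -/
def IsAvar (μ : Measure X) (K : Kernel X X) (f : X → ℝ) (v : ℝ) : Prop :=
  Tendsto (avarSeq μ K f) atTop (nhds v)

/-- The variance `var_μ(f)`. -/
noncomputable def varOf (μ : Measure X) (f : X → ℝ) : ℝ :=
  ∫ x, f x ^ 2 ∂μ - (∫ x, f x ∂μ) ^ 2

/-- The Dirichlet form `E_K(f) = ⟨f, (I - K) f⟩_μ`. -/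
noncomputable def dirichlet (μ : Measure X) (K : Kernel X X) (f : X → ℝ) : ℝ :=
  ∫ x, f x * (f x - kOp K f x) ∂μ

end Defs

/-- The Dirichlet form of a `m`-reversible kernel `P` written as a double integral:
`(1/2) ∫ m(dx) P(x,dx') (g(x) − g(x'))²`. -/
noncomputable def dir2 {Z : Type*} [MeasurableSpace Z]
    (m : Measure Z) (P : Kernel Z Z) (g : Z → ℝ) : ℝ :=
  (1 / 2) * ∫ x, (∫ x', (g x - g x') ^ 2 ∂(P x)) ∂m


/-!
Off the diagonal `w x • K^DA_x = min (w x, w ·) • K_x`, and `(g x - g x')²` vanishes on the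
diagonal, so integrating against `ν = w • μ` turns `E_{K^DA}(g)` into
`½ ∫∫ min (w x, w x') (g x - g x')² K_x(dx') μ(dx)`. The bounds follow from
`c̲ ≤ min (w x, w x') ≤ C`, valid for `μ`-a.e. `x` and `K_x`-a.e. `x'` because `μ` is
`K`-invariant. Invariance of `μ` under `K` and of `ν` under `K^DA` also lets us replace `g` by a
measurable representative. Everything is computed in `ℝ≥0∞` first; the passage to real integrals
is licensed by `g ∈ L²(μ)`, as `g x` and `g x'` are both `μ`-distributed under `μ ⊗ K`.
-/

section DelayedAcceptance

variable {X : Type*} [MeasurableSpace X]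

theorem mul_min_one_div {a b : ℝ} (ha : 0 ≤ a) (hb : 0 ≤ b) : a * min 1 (b / a) = min a b := by
  rcases ha.eq_or_lt with rfl | hpos
  · simp [hb]
  · rw [mul_min_of_nonneg _ _ ha, mul_one, mul_div_cancel₀ _ hpos.ne']

namespace ENNReal

theorem mul_toReal_le_toReal_of_ofReal_mul_le {a b : ℝ≥0∞} {c : ℝ} (hc : 0 ≤ c) (hb : b ≠ ∞)
    (h : ENNReal.ofReal c * a ≤ b) : c * a.toReal ≤ b.toReal := by
  simpa [toReal_mul, toReal_ofReal hc] using toReal_mono hb h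

theorem toReal_le_mul_toReal_of_le_ofReal_mul {a b : ℝ≥0∞} {c : ℝ} (hc : 0 ≤ c) (ha : a ≠ ∞)
    (h : b ≤ ENNReal.ofReal c * a) : b.toReal ≤ c * a.toReal := by
  simpa [toReal_mul, toReal_ofReal hc] using toReal_mono (mul_ne_top ofReal_ne_top ha) h

end ENNReal

theorem lintegral_eq_setLIntegral_compl_singleton [MeasurableSingletonClass X] {m : Measure X}
    {H : X → ℝ≥0∞} {x : X} (hHx : H x = 0) : ∫⁻ y, H y ∂m = ∫⁻ y in {x}ᶜ, H y ∂m := by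
  rw [← lintegral_add_compl H (measurableSet_singleton x), lintegral_singleton, hHx, zero_mul,
    zero_add]

theorem integral_integral_eq_toReal_lintegral_lintegral {m : Measure X} {P : Kernel X X}
    [IsSFiniteKernel P] {f : X → X → ℝ} (hf : Measurable fun z : X × X => f z.1 z.2)
    (hf0 : 0 ≤ f) (hfin : ∫⁻ x, ∫⁻ y, ENNReal.ofReal (f x y) ∂P x ∂m < ∞) :
    ∫ x, ∫ y, f x y ∂P x ∂m = (∫⁻ x, ∫⁻ y, ENNReal.ofReal (f x y) ∂P x ∂m).toReal := by
  have hmeas : Measurable fun x => ∫⁻ y, ENNReal.ofReal (f x y) ∂P x :=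
    hf.ennreal_ofReal.lintegral_kernel_prod_right'
  rw [← integral_toReal hmeas.aemeasurable (ae_lt_top hmeas hfin.ne)]
  refine integral_congr_ae (ae_of_all _ fun x => ?_)
  exact integral_eq_lintegral_of_nonneg_ae (ae_of_all _ (hf0 x))
    (hf.comp measurable_prodMk_left).aestronglyMeasurable

theorem lintegral_lintegral_min_mul_le_ofReal_mul {μ : Measure X} {K : Kernel X X}
    {w : X → ℝ} {C : ℝ} (hC : ∀ᵐ x ∂μ, w x ≤ C) (F : X → X → ℝ≥0∞) :
    ∫⁻ x, ∫⁻ y, ENNReal.ofReal (min (w x) (w y)) * F x y ∂K x ∂μ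
      ≤ ENNReal.ofReal C * ∫⁻ x, ∫⁻ y, F x y ∂K x ∂μ := by
  simp_rw [← lintegral_const_mul' _ _ ENNReal.ofReal_ne_top]
  refine lintegral_mono_ae (hC.mono fun x hx => lintegral_mono fun y => ?_)
  gcongr
  exact (min_le_left _ _).trans hx

theorem Reversible.invariant {μ : Measure X} [SFinite μ] {K : Kernel X X} [IsMarkovKernel K]
    (h : Reversible μ K) : K.Invariant μ := by
  rw [Kernel.Invariant, ← Measure.snd_compProd, h, Measure.snd_map_swap, Measure.fst_compProd]

namespace ProbabilityTheory.Kernel.Invariant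

variable {μ : Measure X} {K : Kernel X X}

theorem ae_ae {p : X → Prop} (h : K.Invariant μ) (hp : ∀ᵐ x ∂μ, p x) :
    ∀ᵐ x ∂μ, ∀ᵐ y ∂K x, p y :=
  Measure.ae_ae_of_ae_comp (h.def.symm ▸ hp)

theorem integral_integral_congr {g g' : X → ℝ} (h : K.Invariant μ) (hg : g =ᵐ[μ] g')
    (Φ : X → X → ℝ → ℝ → ℝ) :
    ∫ x, ∫ y, Φ x y (g x) (g y) ∂K x ∂μ = ∫ x, ∫ y, Φ x y (g' x) (g' y) ∂K x ∂μ := by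
  refine integral_congr_ae ?_
  filter_upwards [hg, h.ae_ae hg] with x hx hxy
  exact integral_congr_ae (hxy.mono fun y hy => by simp only [hx, hy])

theorem dir2_eq_toReal_lintegral_lintegral [IsSFiniteKernel K] {g g' : X → ℝ}
    (h : K.Invariant μ) (hg : g =ᵐ[μ] g') (hg' : Measurable g')
    (hfin : ∫⁻ x, ∫⁻ y, ENNReal.ofReal ((g' x - g' y) ^ 2) ∂K x ∂μ < ∞) :
    dir2 μ K g = 1 / 2 * (∫⁻ x, ∫⁻ y, ENNReal.ofReal ((g' x - g' y) ^ 2) ∂K x ∂μ).toReal := by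
  rw [dir2, h.integral_integral_congr hg fun _ _ a b => (a - b) ^ 2,
    integral_integral_eq_toReal_lintegral_lintegral
      (((hg'.comp measurable_fst).sub (hg'.comp measurable_snd)).pow_const 2)
      (fun _ _ => sq_nonneg _) hfin]

theorem integral_integral_min_mul_eq_toReal_lintegral_lintegral [IsSFiniteKernel K]
    {w g g' : X → ℝ} (h : K.Invariant μ) (hw_meas : Measurable w) (hw_nonneg : 0 ≤ w)
    (hg : g =ᵐ[μ] g') (hg' : Measurable g')
    (hfin : ∫⁻ x, ∫⁻ y, ENNReal.ofReal (min (w x) (w y)) * ENNReal.ofReal ((g' x - g' y) ^ 2)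
      ∂K x ∂μ < ∞) :
    ∫ x, ∫ y, min (w x) (w y) * (g x - g y) ^ 2 ∂K x ∂μ
      = (∫⁻ x, ∫⁻ y, ENNReal.ofReal (min (w x) (w y)) * ENNReal.ofReal ((g' x - g' y) ^ 2)
          ∂K x ∂μ).toReal := by
  have hofReal_mul : ∀ x y, ENNReal.ofReal (min (w x) (w y) * (g' x - g' y) ^ 2)
      = ENNReal.ofReal (min (w x) (w y)) * ENNReal.ofReal ((g' x - g' y) ^ 2) := fun x y =>
    ENNReal.ofReal_mul (le_min (hw_nonneg x) (hw_nonneg y))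
  rw [h.integral_integral_congr hg fun x y a b => min (w x) (w y) * (a - b) ^ 2,
    integral_integral_eq_toReal_lintegral_lintegral
      (((hw_meas.comp measurable_fst).min (hw_meas.comp measurable_snd)).mul
        (((hg'.comp measurable_fst).sub (hg'.comp measurable_snd)).pow_const 2))
      (fun x y => mul_nonneg (le_min (hw_nonneg x) (hw_nonneg y)) (sq_nonneg _))
      (by simpa only [hofReal_mul] using hfin)]
  simp only [hofReal_mul]

theorem memLp_fst_sub_snd [SFinite μ] [IsMarkovKernel K] {p : ℝ≥0∞} {g : X → ℝ}
    (h : K.Invariant μ) (hg : MemLp g p μ) :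
    MemLp (fun z : X × X => g z.1 - g z.2) p (μ ⊗ₘ K) :=
  (hg.comp_measurePreserving ⟨measurable_fst, Measure.fst_compProd μ K⟩).sub
    (hg.comp_measurePreserving ⟨measurable_snd, (Measure.snd_compProd μ K).trans h.def⟩)

theorem lintegral_lintegral_sq_sub_lt_top [SFinite μ] [IsMarkovKernel K] {g : X → ℝ}
    (h : K.Invariant μ) (hg : MemLp g 2 μ) (hgm : Measurable g) :
    ∫⁻ x, ∫⁻ y, ENNReal.ofReal ((g x - g y) ^ 2) ∂K x ∂μ < ∞ := by
  rw [← Measure.lintegral_compProd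
    (f := fun z : X × X => ENNReal.ofReal ((g z.1 - g z.2) ^ 2)) (by fun_prop)]
  exact (h.memLp_fst_sub_snd hg).integrable_sq.lintegral_lt_top

theorem ofReal_mul_le_lintegral_lintegral_min_mul {w : X → ℝ} {c : ℝ} (h : K.Invariant μ)
    (hc : ∀ᵐ x ∂μ, c ≤ w x) (F : X → X → ℝ≥0∞) :
    ENNReal.ofReal c * ∫⁻ x, ∫⁻ y, F x y ∂K x ∂μ
      ≤ ∫⁻ x, ∫⁻ y, ENNReal.ofReal (min (w x) (w y)) * F x y ∂K x ∂μ := by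
  simp_rw [← lintegral_const_mul' _ _ ENNReal.ofReal_ne_top]
  refine lintegral_mono_ae ?_
  filter_upwards [hc, h.ae_ae hc] with x hx hxy
  exact lintegral_mono_ae (hxy.mono fun y hy => by gcongr; exact le_min hx hy)

end ProbabilityTheory.Kernel.Invariant

/-- `KDA` is the delayed-acceptance correction of `K`, specified off the diagonal only: the
rejection mass at `x` is left free. -/
def IsDACorrection (K KDA : Kernel X X) (w : X → ℝ) : Prop :=
  ∀ x : X, ∀ A : Set X, MeasurableSet A →
    KDA x (A \ {x}) = ∫⁻ x' in A \ {x}, ENNReal.ofReal (min 1 (w x' / w x)) ∂(K x)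

namespace IsDACorrection

variable [MeasurableSingletonClass X] {K KDA : Kernel X X} {w : X → ℝ}

theorem restrict_compl_singleton (hDA : IsDACorrection K KDA w) (x : X) :
    (KDA x).restrict {x}ᶜ =
      ((K x).withDensity fun y => ENNReal.ofReal (min 1 (w y / w x))).restrict {x}ᶜ := by
  ext A hA
  rw [Measure.restrict_apply hA, Measure.restrict_apply hA, ← Set.sdiff_eq, hDA x A hA,
    withDensity_apply _ (hA.diff (measurableSet_singleton x))]

theorem ofReal_mul_lintegral (hDA : IsDACorrection K KDA w) (hw_meas : Measurable w)
    (hw_nonneg : 0 ≤ w) (x : X) {H : X → ℝ≥0∞} (hH : Measurable H) (hHx : H x = 0) :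
    ENNReal.ofReal (w x) * ∫⁻ y, H y ∂KDA x
      = ∫⁻ y, ENNReal.ofReal (min (w x) (w y)) * H y ∂K x := by
  calc ENNReal.ofReal (w x) * ∫⁻ y, H y ∂KDA x
      = ENNReal.ofReal (w x) * ∫⁻ y in {x}ᶜ, ENNReal.ofReal (min 1 (w y / w x)) * H y ∂K x := by
        rw [lintegral_eq_setLIntegral_compl_singleton hHx, hDA.restrict_compl_singleton,
          restrict_withDensity (measurableSet_singleton x).compl,
          lintegral_withDensity_eq_lintegral_mul _ (by fun_prop) hH]
        rfl
    _ = ∫⁻ y in {x}ᶜ, ENNReal.ofReal (min (w x) (w y)) * H y ∂K x := by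
        rw [← lintegral_const_mul' _ _ ENNReal.ofReal_ne_top]
        congr 1 with y
        rw [← mul_assoc, ← ENNReal.ofReal_mul (hw_nonneg x),
          mul_min_one_div (hw_nonneg x) (hw_nonneg y)]
    _ = ∫⁻ y, ENNReal.ofReal (min (w x) (w y)) * H y ∂K x :=
        (lintegral_eq_setLIntegral_compl_singleton (by simp [hHx])).symm

theorem lintegral_lintegral_withDensity [IsSFiniteKernel KDA] {μ : Measure X}
    (hDA : IsDACorrection K KDA w) (hw_meas : Measurable w) (hw_nonneg : 0 ≤ w)
    {H : X → X → ℝ≥0∞} (hH : Measurable fun z : X × X => H z.1 z.2) (hH0 : ∀ x, H x x = 0) :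
    ∫⁻ x, ∫⁻ y, H x y ∂KDA x ∂μ.withDensity (fun x => ENNReal.ofReal (w x))
      = ∫⁻ x, ∫⁻ y, ENNReal.ofReal (min (w x) (w y)) * H x y ∂K x ∂μ := by
  have hmeas : Measurable fun x => ∫⁻ y, H x y ∂KDA x := hH.lintegral_kernel_prod_right'
  rw [lintegral_withDensity_eq_lintegral_mul _ (by fun_prop) hmeas]
  exact lintegral_congr fun x =>
    hDA.ofReal_mul_lintegral hw_meas hw_nonneg x (hH.comp measurable_prodMk_left) (hH0 x)

end IsDACorrection

end DelayedAcceptance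

/-- **Dirichlet form comparison for delayed acceptance.**
Let `K` be `μ`-reversible, `w = dν/dμ` with `c̲ ≤ w ≤ C` μ-a.e., and `K^DA` the DA
correction of `K` (ν-reversible). Then for all `g ∈ L²(μ)`:
`c̲ E_K(g) ≤ E_{K^DA}(g) ≤ C E_K(g)`, via the identity
`E_{K^DA}(g) = (1/2)∫ μ(dx) K_x(dx') min{w(x),w(x')} (g(x)−g(x'))²`. -/
theorem da_dirichlet_comparison
    {X : Type*} [MeasurableSpace X] [MeasurableSingletonClass X]
    (μ ν : Measure X) [IsProbabilityMeasure μ] [IsProbabilityMeasure ν]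
    (w : X → ℝ) (hw_meas : Measurable w) (hw_nonneg : 0 ≤ w)
    (hRN : ν = μ.withDensity (fun x => ENNReal.ofReal (w x)))
    (K : Kernel X X) [IsMarkovKernel K] (hKrev : Reversible μ K)
    (KDA : Kernel X X) [IsMarkovKernel KDA]
    (hKDA : ∀ x : X, ∀ A : Set X, MeasurableSet A →
      KDA x (A \ {x}) =
        ∫⁻ x' in A \ {x}, ENNReal.ofReal (min 1 (w x' / w x)) ∂(K x))
    (hDArev : Reversible ν KDA)
    (clo C : ℝ) (hclo : 0 ≤ clo)
    (hwlo : ∀ᵐ x ∂μ, clo ≤ w x) (hwhi : ∀ᵐ x ∂μ, w x ≤ C) :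
    ∀ g : X → ℝ, MemLp g 2 μ →
      clo * dir2 μ K g ≤ dir2 ν KDA g ∧
      dir2 ν KDA g ≤ C * dir2 μ K g ∧
      dir2 ν KDA g
        = (1 / 2) * ∫ x, (∫ x', min (w x) (w x') * (g x - g x') ^ 2 ∂(K x)) ∂μ := by
  intro g hg
  obtain ⟨g', hg'm, hgg'⟩ := hg.aestronglyMeasurable.aemeasurable
  have hμK := hKrev.invariant
  set F : X → X → ℝ≥0∞ := fun x y => ENNReal.ofReal ((g' x - g' y) ^ 2)
  set L := ∫⁻ x, ∫⁻ y, F x y ∂K x ∂μ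
  set M := ∫⁻ x, ∫⁻ y, ENNReal.ofReal (min (w x) (w y)) * F x y ∂K x ∂μ
  have hL : L < ∞ := hμK.lintegral_lintegral_sq_sub_lt_top (hg.ae_eq hgg') hg'm
  have hlo : ENNReal.ofReal clo * L ≤ M := hμK.ofReal_mul_le_lintegral_lintegral_min_mul hwlo F
  have hhi : M ≤ ENNReal.ofReal C * L := lintegral_lintegral_min_mul_le_ofReal_mul hwhi F
  have hM : M < ∞ := hhi.trans_lt (ENNReal.mul_lt_top ENNReal.ofReal_lt_top hL)
  have hDA : ∫⁻ x, ∫⁻ y, F x y ∂KDA x ∂ν = M := by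
    rw [hRN]
    exact IsDACorrection.lintegral_lintegral_withDensity hKDA hw_meas hw_nonneg (by fun_prop)
      (by simp [F])
  have hνμ : ν ≪ μ := hRN ▸ withDensity_absolutelyContinuous μ _
  have hEK : dir2 μ K g = 1 / 2 * L.toReal := hμK.dir2_eq_toReal_lintegral_lintegral hgg' hg'm hL
  have hEDA : dir2 ν KDA g = 1 / 2 * M.toReal := hDA ▸
    hDArev.invariant.dir2_eq_toReal_lintegral_lintegral (hνμ.ae_le hgg') hg'm (hDA ▸ hM)
  have hC : 0 ≤ C := by
    obtain ⟨x, hx1, hx2⟩ := (hwlo.and hwhi).exists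
    exact hclo.trans (hx1.trans hx2)
  refine ⟨?_, ?_, ?_⟩
  · rw [hEK, hEDA]
    linarith [ENNReal.mul_toReal_le_toReal_of_ofReal_mul_le hclo hM.ne hlo]
  · rw [hEK, hEDA]
    linarith [ENNReal.toReal_le_mul_toReal_of_le_ofReal_mul hC hL.ne hhi]
  · rw [hEDA, hμK.integral_integral_min_mul_eq_toReal_lintegral_lintegral hw_meas hw_nonneg hgg'
      hg'm hM]
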